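/- arXiv:1403.7263 — 2 statements merged into one kernel-verified Lean document; each statement's English description precedes it below -/
import Mathlib

section
/- For a Lipschitz function φ on Z_p, the norm of the commutator satisfies ‖[D, π(φ)]‖² = sup over n ≥ 0 and 0 ≤ k < p^n of (1/p) Σ_{i=1}^{p−1} |φ(k) − φ(k + i p^n)|² / p^{−2n}. -/
/-!
On level `n` of the `p`-adic tree the commutator `[D, π(φ)]` maps `g` to
`x ↦ ∑ᵢ a x i * g (child x i)`, where `child x i` runs over the `p` children of `x` on level
`n + 1` and `a x i` is `p^n / p` times a difference of values of `φ`. Since distinct vertices have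
disjoint sets of children, the squared norm of such an operator on a weighted `ℓ²` space is
`sup_x w x * ∑ᵢ |a x i|² / w (child x i)`: Cauchy–Schwarz at each vertex gives the upper bound,
and the vector supported on the children of a single `x`, with values
`conj (a x i) / w (child x i)`, attains it. Lipschitz continuity of `φ` makes this supremum finite.
-/

/-- The vertex `k + i·p^n` viewed in level `n+1` of the `p`-adic tree. -/
def treeIdx (p n : ℕ) (k : Fin (p ^ n)) (i : Fin p) : Fin (p ^ (n + 1)) :=
  ⟨(k : ℕ) + (i : ℕ) * p ^ n, by
    have hk := k.2
    have hi := i.2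
    calc (k : ℕ) + (i : ℕ) * p ^ n < ((i : ℕ) + 1) * p ^ n := by
          rw [Nat.add_mul, one_mul]; omega
      _ ≤ p * p ^ n := Nat.mul_le_mul_right _ hi
      _ = p ^ (n + 1) := by ring⟩

open Function Finset ComplexConjugate

lemma norm_sum_mul_sq_le_of_pos {ι R : Type*} [SeminormedRing R] (s : Finset ι) (a b : ι → R)
    {v : ι → ℝ} (hv : ∀ i ∈ s, 0 < v i) :
    ‖∑ i ∈ s, a i * b i‖ ^ 2 ≤ (∑ i ∈ s, ‖a i‖ ^ 2 / v i) * ∑ i ∈ s, ‖b i‖ ^ 2 * v i := by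
  calc ‖∑ i ∈ s, a i * b i‖ ^ 2 ≤ (∑ i ∈ s, ‖a i‖ * ‖b i‖) ^ 2 := by
        gcongr
        exact (norm_sum_le _ _).trans (sum_le_sum fun i _ => norm_mul_le _ _)
    _ ≤ _ := sum_sq_le_sum_mul_sum_of_sq_le_mul s
        (fun i hi => div_nonneg (sq_nonneg _) (hv i hi).le)
        (fun i hi => mul_nonneg (sq_nonneg _) (hv i hi).le)
        (fun i hi => le_of_eq (by field_simp [(hv i hi).ne']))

section ChildSum

variable {X ι 𝕜 : Type*} [Fintype ι] [RCLike 𝕜] {σ : X × ι → X} {w : X → ℝ}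

def childSum (σ : X × ι → X) (a : X → ι → 𝕜) (g : X → 𝕜) (x : X) : 𝕜 :=
  ∑ i, a x i * g (σ (x, i))

noncomputable def childSumBound (w : X → ℝ) (σ : X × ι → X) (a : X → ι → 𝕜) (x : X) : ℝ :=
  w x * ∑ i, ‖a x i‖ ^ 2 / w (σ (x, i))

lemma childSumBound_nonneg (hw : ∀ x, 0 < w x) (a : X → ι → 𝕜) (x : X) :
    0 ≤ childSumBound w σ a x :=
  mul_nonneg (hw x).le (sum_nonneg fun _ _ => div_nonneg (sq_nonneg _) (hw _).le)

lemma norm_childSum_sq_mul_le (hw : ∀ x, 0 < w x) (a : X → ι → 𝕜) (g : X → 𝕜) (x : X) :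
    ‖childSum σ a g x‖ ^ 2 * w x ≤
      childSumBound w σ a x * ∑ i, ‖g (σ (x, i))‖ ^ 2 * w (σ (x, i)) := by
  calc ‖childSum σ a g x‖ ^ 2 * w x
      ≤ ((∑ i, ‖a x i‖ ^ 2 / w (σ (x, i))) * ∑ i, ‖g (σ (x, i))‖ ^ 2 * w (σ (x, i))) * w x :=
        mul_le_mul_of_nonneg_right
          (norm_sum_mul_sq_le_of_pos _ _ _ fun _ _ => hw _) (hw x).le
    _ = _ := by rw [childSumBound]; ring

variable {f : X → ℝ}

lemma summable_sum_comp_of_injective (hσ : Injective σ) (hf : Summable f) :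
    Summable fun x => ∑ i, f (σ (x, i)) :=
  summable_sum fun _ _ => hf.comp_injective fun _ _ h => congrArg Prod.fst (hσ h)

lemma tsum_sum_comp_le_of_injective (hσ : Injective σ) (hf : Summable f) (hf0 : ∀ x, 0 ≤ f x) :
    ∑' x, ∑ i, f (σ (x, i)) ≤ ∑' x, f x := by
  have hprod : Summable (f ∘ σ) := hf.comp_injective hσ
  calc ∑' x, ∑ i, f (σ (x, i)) = ∑' q, (f ∘ σ) q := by
        rw [hprod.tsum_prod' fun _ => Summable.of_finite]
        exact tsum_congr fun x => (tsum_fintype _).symm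
    _ ≤ ∑' x, f x := tsum_comp_le_tsum_of_inj hf hf0 hσ

theorem tsum_norm_childSum_sq_le (hσ : Injective σ) (hw : ∀ x, 0 < w x) {a : X → ι → 𝕜}
    (hbdd : BddAbove (Set.range (childSumBound w σ a))) {g : X → 𝕜}
    (hg : Summable fun x => ‖g x‖ ^ 2 * w x) :
    Summable (fun x => ‖childSum σ a g x‖ ^ 2 * w x) ∧
      ∑' x, ‖childSum σ a g x‖ ^ 2 * w x ≤
        (⨆ x, childSumBound w σ a x) * ∑' x, ‖g x‖ ^ 2 * w x := by
  have hmaj : ∀ x, ‖childSum σ a g x‖ ^ 2 * w x ≤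
      (⨆ y, childSumBound w σ a y) * ∑ i, ‖g (σ (x, i))‖ ^ 2 * w (σ (x, i)) := fun x =>
    (norm_childSum_sq_mul_le hw a g x).trans <| mul_le_mul_of_nonneg_right (le_ciSup hbdd x)
      (sum_nonneg fun _ _ => mul_nonneg (sq_nonneg _) (hw _).le)
  have hmaj_summable :=
    (summable_sum_comp_of_injective hσ hg).mul_left (⨆ y, childSumBound w σ a y)
  have hsummable := hmaj_summable.of_nonneg_of_le (fun x => mul_nonneg (sq_nonneg _) (hw x).le) hmaj
  refine ⟨hsummable, ?_⟩
  calc ∑' x, ‖childSum σ a g x‖ ^ 2 * w x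
      ≤ ∑' x, (⨆ y, childSumBound w σ a y) * ∑ i, ‖g (σ (x, i))‖ ^ 2 * w (σ (x, i)) :=
        hsummable.tsum_le_tsum hmaj hmaj_summable
    _ = (⨆ y, childSumBound w σ a y) * ∑' x, ∑ i, ‖g (σ (x, i))‖ ^ 2 * w (σ (x, i)) :=
        tsum_mul_left
    _ ≤ _ := mul_le_mul_of_nonneg_left
        (tsum_sum_comp_le_of_injective hσ hg fun x => mul_nonneg (sq_nonneg _) (hw x).le)
        (Real.iSup_nonneg (childSumBound_nonneg hw a))

lemma childSumBound_le_of_forall_tsum_le (hσ : Injective σ) (hw : ∀ x, 0 < w x)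
    {a : X → ι → 𝕜} (hbdd : BddAbove (Set.range (childSumBound w σ a))) {M : ℝ} (hM0 : 0 ≤ M)
    (hM : ∀ g : X → 𝕜, Summable (fun x => ‖g x‖ ^ 2 * w x) →
      ∑' x, ‖childSum σ a g x‖ ^ 2 * w x ≤ M * ∑' x, ‖g x‖ ^ 2 * w x) (x : X) :
    childSumBound w σ a x ≤ M := by
  set e : ι → X := fun i => σ (x, i)
  have he : Injective e := fun _ _ h => congrArg Prod.snd (hσ h)
  set A := ∑ i, ‖a x i‖ ^ 2 / w (e i) with hA
  have hA0 : 0 ≤ A := sum_nonneg fun _ _ => div_nonneg (sq_nonneg _) (hw _).le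
  -- the test vector for which Cauchy–Schwarz is an equality at `x`
  set g : X → 𝕜 := extend e (fun i => conj (a x i) / (w (e i) : 𝕜)) 0
  have hge : ∀ i, g (e i) = conj (a x i) / (w (e i) : 𝕜) := fun i => he.extend_apply _ _ i
  have hg_sq : (fun y => ‖g y‖ ^ 2 * w y) = extend e (fun i => ‖a x i‖ ^ 2 / w (e i)) 0 := by
    funext y
    by_cases hy : ∃ i, e i = y
    · obtain ⟨i, rfl⟩ := hy
      have hwi := (hw (e i)).ne'
      simp only [hge, he.extend_apply, norm_div, RCLike.norm_conj, RCLike.norm_ofReal,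
        abs_of_pos (hw (e i))]
      field_simp
    · simp [g, extend_apply' _ _ _ hy]
  have hg : HasSum (fun y => ‖g y‖ ^ 2 * w y) A := by
    rw [hg_sq]
    exact (hasSum_extend_zero he).2 (hasSum_fintype _)
  have hTg : childSum σ a g x = (A : 𝕜) := by
    rw [hA, RCLike.ofReal_sum]
    refine sum_congr rfl fun i _ => ?_
    change a x i * g (e i) = _
    rw [hge, mul_div_assoc', RCLike.mul_conj, RCLike.ofReal_div, RCLike.ofReal_pow]
  have hx_le : A ^ 2 * w x ≤ M * A :=
    calc A ^ 2 * w x = ‖childSum σ a g x‖ ^ 2 * w x := by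
          rw [hTg, RCLike.norm_ofReal, abs_of_nonneg hA0]
      _ ≤ ∑' y, ‖childSum σ a g y‖ ^ 2 * w y :=
          (tsum_norm_childSum_sq_le hσ hw hbdd hg.summable).1.le_tsum x
            fun y _ => mul_nonneg (sq_nonneg _) (hw y).le
      _ ≤ M * A := (hM g hg.summable).trans_eq (by rw [hg.tsum_eq])
  show w x * A ≤ M
  rcases hA0.eq_or_lt with hA_zero | hA_pos
  · rwa [← hA_zero, mul_zero]
  · nlinarith

theorem isLeast_childSum_bound (hσ : Injective σ) (hw : ∀ x, 0 < w x) {a : X → ι → 𝕜}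
    (hbdd : BddAbove (Set.range (childSumBound w σ a))) :
    IsLeast {M : ℝ | 0 ≤ M ∧ ∀ g : X → 𝕜, Summable (fun x => ‖g x‖ ^ 2 * w x) →
        ∑' x, ‖childSum σ a g x‖ ^ 2 * w x ≤ M * ∑' x, ‖g x‖ ^ 2 * w x}
      (⨆ x, childSumBound w σ a x) :=
  ⟨⟨Real.iSup_nonneg (childSumBound_nonneg hw a),
      fun _ hg => (tsum_norm_childSum_sq_le hσ hw hbdd hg).2⟩,
    fun _ ⟨hM0, hM⟩ => Real.iSup_le (childSumBound_le_of_forall_tsum_le hσ hw hbdd hM0 hM) hM0⟩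

end ChildSum

def treeChild (p : ℕ) (q : (Σ n : ℕ, Fin (p ^ n)) × Fin p) : Σ n : ℕ, Fin (p ^ n) :=
  ⟨q.1.1 + 1, treeIdx p q.1.1 q.1.2 q.2⟩

lemma treeIdx_inj {p n : ℕ} {k k' : Fin (p ^ n)} {i i' : Fin p} :
    treeIdx p n k i = treeIdx p n k' i' ↔ k = k' ∧ i = i' := by
  refine ⟨fun h => ?_, by rintro ⟨rfl, rfl⟩; rfl⟩
  have hval : (k : ℕ) + i * p ^ n = k' + i' * p ^ n := congrArg Fin.val h
  have hk : (k : ℕ) = k' := by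
    simpa [Nat.add_mul_mod_self_right, Nat.mod_eq_of_lt k.2, Nat.mod_eq_of_lt k'.2]
      using congrArg (· % p ^ n) hval
  have hi : (i : ℕ) * p ^ n = i' * p ^ n := by omega
  exact ⟨Fin.ext hk, Fin.ext (Nat.eq_of_mul_eq_mul_right k.pos hi)⟩

lemma treeChild_injective (p : ℕ) : Injective (treeChild p) := by
  rintro ⟨⟨n, k⟩, i⟩ ⟨⟨m, k'⟩, i'⟩ h
  obtain rfl : n = m := Nat.succ_injective (congrArg Sigma.fst h)
  obtain ⟨rfl, rfl⟩ := treeIdx_inj.1 (eq_of_heq (Sigma.mk.inj_iff.1 h).2)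
  rfl

lemma sum_fin_eq_sum_Icc_of_map_zero {M : Type*} [AddCommMonoid M] (f : ℕ → M) (h0 : f 0 = 0)
    (n : ℕ) : ∑ i : Fin n, f i = ∑ i ∈ Icc 1 (n - 1), f i := by
  rw [Fin.sum_univ_eq_sum_range]
  refine (sum_subset (fun i hi => ?_) fun i hi hi' => ?_).symm
  · simp only [mem_Icc, mem_range] at hi ⊢
    omega
  · simp only [mem_Icc, mem_range] at hi hi'
    obtain rfl : i = 0 := by omega
    exact h0

section Padic

variable {p : ℕ} [Fact p.Prime]

lemma PadicInt.norm_natCast_sub_natCast_add_mul_pow_le (k i n : ℕ) :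
    ‖(k : ℤ_[p]) - ((k + i * p ^ n : ℕ) : ℤ_[p])‖ ≤ ((p : ℝ) ^ n)⁻¹ := by
  calc ‖(k : ℤ_[p]) - ((k + i * p ^ n : ℕ) : ℤ_[p])‖ = ‖(i : ℤ_[p]) * (p : ℤ_[p]) ^ n‖ := by
        rw [← norm_neg]
        push_cast
        ring_nf
    _ ≤ ‖(p : ℤ_[p]) ^ n‖ := by
        rw [norm_mul]
        exact mul_le_of_le_one_left (norm_nonneg _) (PadicInt.norm_le_one _)
    _ = ((p : ℝ) ^ n)⁻¹ := by simp

lemma norm_sub_sq_mul_pow_le_of_lipschitz {φ : ℤ_[p] → ℂ} {C : ℝ}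
    (hC : ∀ x y, ‖φ x - φ y‖ ≤ C * ‖x - y‖) (k i n : ℕ) :
    ‖φ k - φ ((k + i * p ^ n : ℕ) : ℤ_[p])‖ ^ 2 * (p : ℝ) ^ (2 * n) ≤ C ^ 2 := by
  set d := ‖(k : ℤ_[p]) - ((k + i * p ^ n : ℕ) : ℤ_[p])‖
  have hd : d * (p : ℝ) ^ n ≤ 1 := by
    rw [← le_div_iff₀ (pow_pos (Nat.cast_pos.2 (Fact.out : p.Prime).pos) n), one_div]
    exact PadicInt.norm_natCast_sub_natCast_add_mul_pow_le k i n
  calc ‖φ k - φ ((k + i * p ^ n : ℕ) : ℤ_[p])‖ ^ 2 * (p : ℝ) ^ (2 * n)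
      ≤ (C * d) ^ 2 * (p : ℝ) ^ (2 * n) := by gcongr; exact hC _ _
    _ = C ^ 2 * (d * (p : ℝ) ^ n) ^ 2 := by ring
    _ ≤ C ^ 2 * 1 ^ 2 := by gcongr
    _ = C ^ 2 := by ring

noncomputable def treeWeight (p : ℕ) (x : Σ n : ℕ, Fin (p ^ n)) : ℝ := ((p : ℝ) ^ x.1)⁻¹

-- `[D, π(φ)] f_n(k) = ∑ᵢ commutatorCoeff p φ ⟨n, k⟩ i * f_{n+1}(k + i p^n)`: the terms
-- `φ(k) f_n(k)` cancel.
noncomputable def commutatorCoeff (p : ℕ) [Fact p.Prime] (φ : ℤ_[p] → ℂ)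
    (x : Σ n : ℕ, Fin (p ^ n)) (i : Fin p) : ℂ :=
  (p : ℂ) ^ x.1 / p * (φ ((x.2 : ℕ) : ℤ_[p]) - φ (((x.2 : ℕ) + (i : ℕ) * p ^ x.1 : ℕ) : ℤ_[p]))

lemma treeWeight_pos (x : Σ n : ℕ, Fin (p ^ n)) : 0 < treeWeight p x :=
  inv_pos.2 (pow_pos (Nat.cast_pos.2 (Fact.out : p.Prime).pos) x.1)

variable (φ : ℤ_[p] → ℂ)

lemma childSum_commutatorCoeff (g : (Σ n : ℕ, Fin (p ^ n)) → ℂ) (x : Σ n : ℕ, Fin (p ^ n)) :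
    childSum (treeChild p) (commutatorCoeff p φ) g x = (p : ℂ) ^ x.1 / p * ∑ i : Fin p,
      (φ ((x.2 : ℕ) : ℤ_[p]) - φ (((x.2 : ℕ) + (i : ℕ) * p ^ x.1 : ℕ) : ℤ_[p])) *
        g (treeChild p (x, i)) := by
  simp only [childSum, commutatorCoeff, mul_sum, mul_assoc]

lemma childSumBound_commutatorCoeff (x : Σ n : ℕ, Fin (p ^ n)) :
    childSumBound (treeWeight p) (treeChild p) (commutatorCoeff p φ) x =
      (p : ℝ)⁻¹ * ∑ i : Fin p,
        ‖φ ((x.2 : ℕ) : ℤ_[p]) - φ (((x.2 : ℕ) + (i : ℕ) * p ^ x.1 : ℕ) : ℤ_[p])‖ ^ 2 *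
          (p : ℝ) ^ (2 * x.1) := by
  have hp : (p : ℝ) ≠ 0 := Nat.cast_ne_zero.2 (Fact.out : p.Prime).ne_zero
  simp only [childSumBound, treeWeight, treeChild, commutatorCoeff, norm_mul, norm_div, norm_pow,
    Complex.norm_natCast, mul_sum]
  refine sum_congr rfl fun i _ => ?_
  field_simp
  ring

lemma bddAbove_childSumBound_commutatorCoeff {C : ℝ} (hC : ∀ x y, ‖φ x - φ y‖ ≤ C * ‖x - y‖) :
    BddAbove (Set.range (childSumBound (treeWeight p) (treeChild p) (commutatorCoeff p φ))) := by
  refine ⟨C ^ 2, ?_⟩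
  rintro _ ⟨x, rfl⟩
  have hp : (p : ℝ) ≠ 0 := Nat.cast_ne_zero.2 (Fact.out : p.Prime).ne_zero
  calc childSumBound (treeWeight p) (treeChild p) (commutatorCoeff p φ) x
      ≤ (p : ℝ)⁻¹ * ∑ _i : Fin p, C ^ 2 := by
        rw [childSumBound_commutatorCoeff]
        gcongr
        exact norm_sub_sq_mul_pow_le_of_lipschitz hC _ _ _
    _ = C ^ 2 := by
        rw [sum_const, card_univ, Fintype.card_fin, nsmul_eq_mul]
        field_simp

end Padic

/-- For a Lipschitz function `φ` on `ℤ_p`,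
`‖[D,π(φ)]‖² = sup_{n, 0≤k<p^n} (1/p) ∑_{i=1}^{p-1} |φ(k) - φ(k+ip^n)|² / p^{-2n}`:
the right-hand side is the least constant `M ≥ 0` with
`‖[D,π(φ)]g‖² ≤ M ‖g‖²` for all `g` in the weighted `ℓ²` space. -/
theorem stmt17 (p : ℕ) [hp : Fact p.Prime] (φ : C(ℤ_[p], ℂ))
    (hφ : ∃ C : ℝ, ∀ x y : ℤ_[p], ‖φ x - φ y‖ ≤ C * ‖x - y‖) :
    IsLeast {M : ℝ | 0 ≤ M ∧ ∀ g : ∀ n : ℕ, Fin (p ^ n) → ℂ,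
        Summable (fun x : Σ n : ℕ, Fin (p ^ n) => ‖g x.1 x.2‖ ^ 2 * ((p : ℝ) ^ x.1)⁻¹) →
        ∑' x : Σ n : ℕ, Fin (p ^ n),
            ‖((p : ℂ) ^ x.1 / (p : ℂ)) * ∑ i : Fin p,
                (φ (((x.2 : ℕ) : ℤ_[p])) - φ ((((x.2 : ℕ) + (i : ℕ) * p ^ x.1 : ℕ)) : ℤ_[p])) *
                  g (x.1 + 1) (treeIdx p x.1 x.2 i)‖ ^ 2 * ((p : ℝ) ^ x.1)⁻¹
          ≤ M * ∑' x : Σ n : ℕ, Fin (p ^ n), ‖g x.1 x.2‖ ^ 2 * ((p : ℝ) ^ x.1)⁻¹}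
      (⨆ x : Σ n : ℕ, Fin (p ^ n),
        (p : ℝ)⁻¹ * ∑ i ∈ Finset.Icc 1 (p - 1),
          ‖φ (((x.2 : ℕ) : ℤ_[p])) - φ ((((x.2 : ℕ) + i * p ^ x.1 : ℕ)) : ℤ_[p])‖ ^ 2 *
            (p : ℝ) ^ (2 * x.1)) := by
  obtain ⟨C, hC⟩ := hφ
  have key := isLeast_childSum_bound (treeChild_injective p) treeWeight_pos
    (bddAbove_childSumBound_commutatorCoeff φ hC)
  have hbound : ∀ x, childSumBound (treeWeight p) (treeChild p) (commutatorCoeff p φ) x =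
      (p : ℝ)⁻¹ * ∑ i ∈ Finset.Icc 1 (p - 1),
        ‖φ (((x.2 : ℕ) : ℤ_[p])) - φ ((((x.2 : ℕ) + i * p ^ x.1 : ℕ)) : ℤ_[p])‖ ^ 2 *
          (p : ℝ) ^ (2 * x.1) := fun x => by
    rw [childSumBound_commutatorCoeff, sum_fin_eq_sum_Icc_of_map_zero
      (fun i => ‖φ (((x.2 : ℕ) : ℤ_[p])) - φ ((((x.2 : ℕ) + i * p ^ x.1 : ℕ)) : ℤ_[p])‖ ^ 2 *
        (p : ℝ) ^ (2 * x.1)) (by simp)]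
  convert key using 1
  · ext M
    simp only [childSum_commutatorCoeff]
    exact and_congr_right fun _ =>
      ⟨fun h g => h fun n k => g ⟨n, k⟩, fun h g => h fun x => g x.1 x.2⟩
  · exact congrArg iSup (funext hbound).symm
end

section
/- If φ : Z_p → ℂ is continuous and there is a constant C ≥ 0 such that |φ(k) − φ(k + i p^n)| ≤ C p^{−n} for all n ≥ 0, all 0 ≤ k < p^n, and all 0 ≤ i ≤ p−1, then φ is Lipschitz with |φ(x) − φ(y)| ≤ (2C/(1 − p^{−1})) |x − y|_p for all x, y ∈ Z_p. -/
/-!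
The approximations `x.appr n` are the partial sums of the `p`-adic digit expansion of `x`;
consecutive ones differ by one digit times `p ^ n`, so the hypothesis bounds
`dist (φ (x.appr n)) (φ (x.appr (n + 1)))` by `C p⁻ⁿ`. Telescoping and continuity of `φ` give
`dist (φ (x.appr n)) (φ x) ≤ C p⁻ⁿ / (1 - p⁻¹)`. If `‖x - y‖ = p⁻ⁿ`, then `x` and `y` share
their first `n` digits, and the triangle inequality through the common approximation gives the
bound with the factor `2`.
-/

open Filter Topology

namespace PadicInt

variable {p : ℕ} [Fact p.Prime]

theorem norm_sub_appr_le (x : ℤ_[p]) (n : ℕ) : ‖x - x.appr n‖ ≤ (p : ℝ)⁻¹ ^ n := by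
  rw [inv_pow, ← zpow_natCast, ← zpow_neg, norm_le_pow_iff_mem_span_pow]
  exact appr_spec n x

theorem tendsto_appr (x : ℤ_[p]) : Tendsto (fun n ↦ (x.appr n : ℤ_[p])) atTop (𝓝 x) := by
  have hp : (p : ℝ)⁻¹ < 1 := inv_lt_one_of_one_lt₀ (mod_cast (Fact.out : p.Prime).one_lt)
  refine tendsto_iff_norm_sub_tendsto_zero.2 <| squeeze_zero (fun _ ↦ norm_nonneg _)
    (fun n ↦ (norm_sub_rev _ x).trans_le (norm_sub_appr_le x n)) ?_
  exact tendsto_pow_atTop_nhds_zero_of_lt_one (by positivity) hp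

theorem exists_appr_succ_eq (x : ℤ_[p]) (n : ℕ) :
    ∃ i ≤ p - 1, x.appr (n + 1) = x.appr n + i * p ^ n := by
  obtain ⟨i, hi⟩ := x.dvd_appr_sub_appr n (n + 1) n.le_succ
  have hmono : x.appr n ≤ x.appr (n + 1) := x.appr_mono n.le_succ
  have hlt : p ^ n * i < p ^ n * p := by
    calc p ^ n * i ≤ x.appr (n + 1) := by omega
      _ < p ^ (n + 1) := x.appr_lt (n + 1)
      _ = p ^ n * p := pow_succ p n
  refine ⟨i, Nat.le_sub_one_of_lt (Nat.lt_of_mul_lt_mul_left hlt), ?_⟩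
  rw [mul_comm]
  omega

theorem appr_eq_of_norm_sub_le {x y : ℤ_[p]} {n : ℕ} (h : ‖x - y‖ ≤ (p : ℝ) ^ (-(n : ℤ))) :
    x.appr n = y.appr n := by
  rw [norm_le_pow_iff_mem_span_pow, ← ker_toZModPow, RingHom.mem_ker, map_sub, sub_eq_zero] at h
  have : (x.appr n : ZMod (p ^ n)) = y.appr n := h
  rw [ZMod.natCast_eq_natCast_iff'] at this
  rwa [Nat.mod_eq_of_lt (x.appr_lt n), Nat.mod_eq_of_lt (y.appr_lt n)] at this

theorem dist_comp_appr_le {α : Type*} [PseudoMetricSpace α] {φ : ℤ_[p] → α} (hφ : Continuous φ)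
    {C : ℝ} {x : ℤ_[p]} (hstep : ∀ n, dist (φ (x.appr n)) (φ (x.appr (n + 1))) ≤ C * (p : ℝ)⁻¹ ^ n)
    (n : ℕ) : dist (φ (x.appr n)) (φ x) ≤ C * (p : ℝ)⁻¹ ^ n / (1 - (p : ℝ)⁻¹) :=
  dist_le_of_le_geometric_of_tendsto _ C
    (inv_lt_one_of_one_lt₀ (mod_cast (Fact.out : p.Prime).one_lt)) hstep
    ((hφ.tendsto x).comp x.tendsto_appr) n

end PadicInt

theorem stmt19_general (p : ℕ) [hp : Fact p.Prime] (φ : ℤ_[p] → ℂ) (hcont : Continuous φ)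
    (C : ℝ)
    (h : ∀ n k i : ℕ, k < p ^ n → i ≤ p - 1 →
      ‖φ ((k : ℤ_[p])) - φ (((k + i * p ^ n : ℕ) : ℤ_[p]))‖ ≤ C * (p : ℝ) ^ (-(n : ℤ))) :
    ∀ x y : ℤ_[p], ‖φ x - φ y‖ ≤ 2 * C / (1 - (p : ℝ)⁻¹) * ‖x - y‖ := by
  have hstep (x : ℤ_[p]) (n : ℕ) :
      dist (φ (x.appr n)) (φ (x.appr (n + 1))) ≤ C * (p : ℝ)⁻¹ ^ n := by
    obtain ⟨i, hi, hsucc⟩ := x.exists_appr_succ_eq n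
    rw [hsucc, dist_eq_norm, inv_pow, ← zpow_natCast, ← zpow_neg]
    exact h n _ i (x.appr_lt n) hi
  intro x y
  rcases eq_or_ne x y with rfl | hxy
  · simp
  set n := (x - y).valuation
  have hnorm : ‖x - y‖ = (p : ℝ) ^ (-(n : ℤ)) :=
    PadicInt.norm_eq_zpow_neg_valuation (sub_ne_zero.2 hxy)
  have happr : x.appr n = y.appr n := PadicInt.appr_eq_of_norm_sub_le hnorm.le
  rw [← dist_eq_norm]
  calc dist (φ x) (φ y) ≤ dist (φ (x.appr n)) (φ x) + dist (φ (y.appr n)) (φ y) := by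
        rw [← happr]; exact dist_triangle_left _ _ _
    _ ≤ C * (p : ℝ)⁻¹ ^ n / (1 - (p : ℝ)⁻¹) + C * (p : ℝ)⁻¹ ^ n / (1 - (p : ℝ)⁻¹) :=
        add_le_add (PadicInt.dist_comp_appr_le hcont (hstep x) n)
          (PadicInt.dist_comp_appr_le hcont (hstep y) n)
    _ = 2 * C / (1 - (p : ℝ)⁻¹) * ‖x - y‖ := by
        rw [hnorm, zpow_neg, zpow_natCast, inv_pow]; ring

/-- If `φ : ℤ_p → ℂ` is continuous and `|φ(k) - φ(k+ip^n)| ≤ C p^{-n}` for all `n ≥ 0`,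
`0 ≤ k < p^n` and `0 ≤ i ≤ p-1`, then `φ` is Lipschitz with
`|φ(x) - φ(y)| ≤ (2C/(1-p⁻¹)) |x-y|_p`. -/
theorem stmt19 (p : ℕ) [hp : Fact p.Prime] (φ : ℤ_[p] → ℂ) (hcont : Continuous φ)
    (C : ℝ) (hC : 0 ≤ C)
    (h : ∀ n k i : ℕ, k < p ^ n → i ≤ p - 1 →
      ‖φ ((k : ℤ_[p])) - φ (((k + i * p ^ n : ℕ) : ℤ_[p]))‖ ≤ C * (p : ℝ) ^ (-(n : ℤ))) :
    ∀ x y : ℤ_[p], ‖φ x - φ y‖ ≤ 2 * C / (1 - (p : ℝ)⁻¹) * ‖x - y‖ :=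
  stmt19_general p (hp := hp) φ hcont C h
end
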